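/- Let 𝒳 = χ^⊕ with χ a homogeneous polynomial of degree r+1 (r ≥ 1) and F = f^⊕ with f a homogeneous polynomial of degree s+1 (s ≥ 1), both cyclically symmetric functions on ℝ^N × ℝ^N, and let L_𝒳 Y(z) := dY(z)[X_𝒳(z)] denote the Lie derivative of a vector field Y along X_𝒳. Then for every integer p ≥ 1 and every z ∈ ℝ^{2N} one has ‖(L_𝒳^p X_F)(z)‖ ≤ (Π_{j=0}^{p−1} [s + j(r−1)]) · |X_F|_1 · (|X_𝒳|_1)^p · ‖z‖^{s+p(r−1)}, where ‖·‖ is either the Euclidean (ℓ²) or the supremum (ℓ^∞) norm on ℝ^{2N}. -/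

import Mathlib

/-!
Since `𝒳` and `F` are invariant under the cyclic shift `τ`, the `x_j`- and `y_j`-components of
`X_F` are the `τ^j`-translates of the two seeds `∂F/∂y₁` and `-∂F/∂x₁`. The Lie derivative along
`X_𝒳` of a polynomial vector field acts componentwise as the Poisson bracket `{·, 𝒳}`, which
commutes with `τ`, so `L_𝒳^p X_F` has the same shape with seeds `{·, 𝒳}^p` applied to the old ones.
Measured by the `ℓ¹`-norm of the coefficients, one bracket with `𝒳` costs at most a factor
`deg · |X_𝒳|₁` (because `∑_l ‖∂_l g‖ ≤ deg g · ‖g‖` and `‖∂𝒳/∂x_j‖` does not depend on `j`), and it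
raises the degree by `r - 1`; this produces the product. A homogeneous polynomial of degree `d` is
bounded by its coefficient norm times `‖z‖^d` in the sup norm; in `ℓ²` the vector of
`τ^j`-translates of a monomial has norm at most `‖z‖^d`, because one of its factors runs through a
`τ`-orbit of coordinates while the others are bounded by `‖z‖`.
-/

open MvPolynomial Finset Real

/-- index set for the `2N` variables: `inl j` ↦ `x_j`, `inr j` ↦ `y_j` (indices mod `N`). -/
abbrev Idx (N : ℕ) := Fin N ⊕ Fin N

open scoped Fin.IntCast in
/-- the cyclic shift `τ^s` (`s ∈ ℤ`) acting on polynomials: `τ^s X_j = X_{j+s}`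
(indices mod `N`), separately on the `x` and `y` variables, so that
`(τ^s f)(x,y) = f(τ^s x, τ^s y)`. -/
noncomputable def tauPow (N : ℕ) [NeZero N] (s : ℤ) (f : MvPolynomial (Idx N) ℝ) :
    MvPolynomial (Idx N) ℝ :=
  rename (Sum.map (· + (s : Fin N)) (· + (s : Fin N))) f

/-- `f ↦ f^⊕ := ∑_{l=1}^N τ^l f`. -/
noncomputable def oplus (N : ℕ) [NeZero N] (f : MvPolynomial (Idx N) ℝ) :
    MvPolynomial (Idx N) ℝ :=
  ∑ l ∈ Finset.range N, tauPow N ((l : ℤ) + 1) f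

/-- the polynomial norm `‖f‖_R`; for a homogeneous polynomial of degree `s` it equals
`R^s ∑_{|j|+|k|=s} |f_{j,k}|`. -/
noncomputable def pnorm {N : ℕ} (R : ℝ) (f : MvPolynomial (Idx N) ℝ) : ℝ :=
  ∑ d ∈ f.support, |f.coeff d| * R ^ (d.sum fun _ e => e)

/-- the Poisson bracket `{f,g} = ∑_j (∂f/∂x_j ∂g/∂y_j − ∂f/∂y_j ∂g/∂x_j)`. -/
noncomputable def poisson (N : ℕ) (f g : MvPolynomial (Idx N) ℝ) : MvPolynomial (Idx N) ℝ :=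
  ∑ j : Fin N,
    (pderiv (Sum.inl j) f * pderiv (Sum.inr j) g - pderiv (Sum.inr j) f * pderiv (Sum.inl j) g)

/-- the norm `|X_F|_R := ‖X_1‖_R + ‖X_{N+1}‖_R` of the Hamiltonian vector field
`X_F = J∇F` (here `X_1 = ∂F/∂y_1` and `X_{N+1} = −∂F/∂x_1`). -/
noncomputable def hamNorm (N : ℕ) [NeZero N] (R : ℝ) (F : MvPolynomial (Idx N) ℝ) : ℝ :=
  pnorm R (pderiv (Sum.inr 0) F) + pnorm R (-pderiv (Sum.inl 0) F)

/-- the Hamiltonian vector field `X_F = J∇F` as a map on the phase space `ℝ^{2N}`: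
`ẋ_j = ∂F/∂y_j`, `ẏ_j = −∂F/∂x_j`. -/
noncomputable def Xvec (N : ℕ) (F : MvPolynomial (Idx N) ℝ) (z : Idx N → ℝ) : Idx N → ℝ :=
  Sum.elim (fun j => eval z (pderiv (Sum.inr j) F)) (fun j => -eval z (pderiv (Sum.inl j) F))

/-- the euclidean (`ℓ²`) norm on `ℝ^{2N}`; the supremum (`ℓ^∞`) norm is the `Pi` norm `‖·‖`. -/
noncomputable def euclNorm {N : ℕ} (z : Idx N → ℝ) : ℝ :=
  Real.sqrt (∑ l, z l ^ 2)

/-- the Lie derivative of a vector field `Y` along the vector field `V`: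
`(L_V Y)(z) = dY(z)[V(z)]`. -/
noncomputable def lieD {N : ℕ} (V : (Idx N → ℝ) → (Idx N → ℝ)) :
    ((Idx N → ℝ) → (Idx N → ℝ)) → ((Idx N → ℝ) → (Idx N → ℝ)) :=
  fun Y z => fderiv ℝ Y z (V z)

section CoeffL1

variable {σ : Type*}

noncomputable def coeffL1 (q : MvPolynomial σ ℝ) : ℝ := ∑ d ∈ q.support, |q.coeff d|

lemma coeffL1_nonneg (q : MvPolynomial σ ℝ) : 0 ≤ coeffL1 q :=
  Finset.sum_nonneg fun _ _ => abs_nonneg _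

lemma coeffL1_eq_sum_of_support_subset {q : MvPolynomial σ ℝ} {t : Finset (σ →₀ ℕ)}
    (ht : q.support ⊆ t) : coeffL1 q = ∑ d ∈ t, |q.coeff d| :=
  Finset.sum_subset ht fun d _ hd => by simp [notMem_support_iff.mp hd]

lemma coeffL1_neg (q : MvPolynomial σ ℝ) : coeffL1 (-q) = coeffL1 q := by
  simp [coeffL1, support_neg]

lemma coeffL1_add_le (a b : MvPolynomial σ ℝ) : coeffL1 (a + b) ≤ coeffL1 a + coeffL1 b := by
  classical
  rw [coeffL1_eq_sum_of_support_subset support_add,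
    coeffL1_eq_sum_of_support_subset (Finset.subset_union_left (s₂ := b.support)),
    coeffL1_eq_sum_of_support_subset (Finset.subset_union_right (s₁ := a.support)),
    ← Finset.sum_add_distrib]
  exact Finset.sum_le_sum fun d _ => by simpa only [coeff_add] using abs_add_le _ _

lemma coeffL1_sum_le {ι : Type*} (t : Finset ι) (f : ι → MvPolynomial σ ℝ) :
    coeffL1 (∑ i ∈ t, f i) ≤ ∑ i ∈ t, coeffL1 (f i) :=
  Finset.le_sum_of_subadditive coeffL1 (by simp [coeffL1]) coeffL1_add_le t f

lemma coeffL1_sub_le (a b : MvPolynomial σ ℝ) : coeffL1 (a - b) ≤ coeffL1 a + coeffL1 b := by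
  simpa only [sub_eq_add_neg, coeffL1_neg] using coeffL1_add_le a (-b)

lemma coeffL1_monomial_le (u : σ →₀ ℕ) (c : ℝ) : coeffL1 (monomial u c) ≤ |c| := by
  classical
  rcases eq_or_ne c 0 with rfl | hc
  · simp [coeffL1]
  · simp [coeffL1, support_monomial, hc]

lemma coeffL1_monomial_mul_le (u : σ →₀ ℕ) (c : ℝ) (b : MvPolynomial σ ℝ) :
    coeffL1 (monomial u c * b) ≤ |c| * coeffL1 b := by
  classical
  have hsupp : (monomial u c * b).support ⊆ b.support.map (addLeftEmbedding u) := by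
    intro d hd
    obtain ⟨x, hx, y, hy, rfl⟩ := Finset.mem_add.mp (support_mul _ _ hd)
    obtain rfl : x = u := by simpa using support_monomial_subset hx
    exact Finset.mem_map.mpr ⟨y, hy, rfl⟩
  rw [coeffL1_eq_sum_of_support_subset hsupp, Finset.sum_map, coeffL1, Finset.mul_sum]
  refine Finset.sum_le_sum fun e _ => ?_
  simp [addLeftEmbedding, coeff_monomial_mul, abs_mul]

lemma coeffL1_mul_le (a b : MvPolynomial σ ℝ) : coeffL1 (a * b) ≤ coeffL1 a * coeffL1 b := by
  conv_lhs => rw [← a.support_sum_monomial_coeff, Finset.sum_mul]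
  refine (coeffL1_sum_le _ _).trans ?_
  rw [coeffL1, Finset.sum_mul]
  exact Finset.sum_le_sum fun u _ => coeffL1_monomial_mul_le u _ b

lemma coeffL1_rename_of_injective {τ : Type*} {g : σ → τ} (hg : Function.Injective g)
    (q : MvPolynomial σ ℝ) : coeffL1 (rename g q) = coeffL1 q := by
  classical
  rw [coeffL1, coeffL1, support_rename_of_injective hg,
    Finset.sum_image fun a _ b _ h => Finsupp.mapDomain_injective hg h]
  simp only [coeff_rename_mapDomain g hg]

lemma sum_coeffL1_pderiv_le [Fintype σ] {q : MvPolynomial σ ℝ} {n : ℕ} (hq : q.IsHomogeneous n) :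
    ∑ l : σ, coeffL1 (pderiv l q) ≤ n * coeffL1 q := by
  have hl : ∀ l : σ, coeffL1 (pderiv l q) ≤ ∑ u ∈ q.support, |q.coeff u| * u l := by
    intro l
    conv_lhs => rw [← q.support_sum_monomial_coeff, map_sum]
    refine (coeffL1_sum_le _ _).trans (Finset.sum_le_sum fun u _ => ?_)
    rw [pderiv_monomial]
    exact (coeffL1_monomial_le _ _).trans_eq (by rw [abs_mul, Nat.abs_cast])
  refine (Finset.sum_le_sum fun l _ => hl l).trans_eq ?_
  rw [Finset.sum_comm, coeffL1, Finset.mul_sum]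
  refine Finset.sum_congr rfl fun u hu => ?_
  have hdeg : u.degree = n := (hq.degree_eq_sum_deg_support hu).symm
  rw [← Finset.mul_sum, mul_comm, ← Nat.cast_sum, ← Finsupp.degree_eq_sum, hdeg]

lemma abs_prod_pow_le (u : σ →₀ ℕ) {x : σ → ℝ} {M : ℝ} (hx : ∀ i, |x i| ≤ M) :
    |u.prod fun i e => x i ^ e| ≤ M ^ u.degree := by
  rw [Finsupp.prod, Finset.abs_prod, Finsupp.degree_apply, ← Finset.prod_pow_eq_pow_sum]
  exact Finset.prod_le_prod (fun _ _ => abs_nonneg _) fun i _ => by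
    rw [abs_pow]; exact pow_le_pow_left₀ (abs_nonneg _) (hx i) _

lemma abs_prod_pow_le_mul (u : σ →₀ ℕ) {i : σ} (hu : u i ≠ 0) {x : σ → ℝ} {M : ℝ}
    (hx : ∀ i, |x i| ≤ M) : |u.prod fun i e => x i ^ e| ≤ |x i| * M ^ (u.degree - 1) := by
  obtain ⟨v, rfl⟩ : ∃ v, u = Finsupp.single i 1 + v :=
    ⟨u - Finsupp.single i 1, (add_tsub_cancel_of_le
      (Finsupp.single_le_iff.mpr (Nat.one_le_iff_ne_zero.mpr hu))).symm⟩
  rw [Finsupp.prod_add_index' (fun _ => pow_zero _) (fun _ _ _ => pow_add _ _ _),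
    Finsupp.prod_single_index (h := fun j e => x j ^ e) (pow_zero _), map_add,
    Finsupp.degree_single, add_tsub_cancel_left, abs_mul, pow_one]
  exact mul_le_mul_of_nonneg_left (abs_prod_pow_le v hx) (abs_nonneg _)

lemma abs_eval_le {q : MvPolynomial σ ℝ} {n : ℕ} (hq : q.IsHomogeneous n) {x : σ → ℝ} {M : ℝ}
    (hx : ∀ i, |x i| ≤ M) : |eval x q| ≤ coeffL1 q * M ^ n := by
  rw [eval_eq, coeffL1, Finset.sum_mul]
  refine (Finset.abs_sum_le_sum_abs _ _).trans (Finset.sum_le_sum fun u hu => ?_)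
  have hdeg : u.degree = n := (hq.degree_eq_sum_deg_support hu).symm
  rw [abs_mul, ← hdeg]
  exact mul_le_mul_of_nonneg_left (abs_prod_pow_le u hx) (abs_nonneg _)

end CoeffL1

lemma hasFDerivAt_eval {σ : Type*} [Fintype σ] (q : MvPolynomial σ ℝ) (z : σ → ℝ) :
    HasFDerivAt (fun w : σ → ℝ => eval w q)
      (∑ l : σ, eval z (pderiv l q) • (ContinuousLinearMap.proj l : (σ → ℝ) →L[ℝ] ℝ)) z := by
  classical
  induction q using MvPolynomial.induction_on with
  | C a => simpa using hasFDerivAt_const a z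
  | add p q hp hq =>
    simp only [map_add, add_smul, Finset.sum_add_distrib]
    exact hp.add hq
  | mul_X p i hp =>
    simp only [eval_mul, eval_X]
    refine (hp.mul (hasFDerivAt_apply i z)).congr_fderiv (ContinuousLinearMap.ext fun w => ?_)
    simp [pderiv_X, Pi.single_apply, mul_add, Finset.sum_add_distrib, apply_ite, Finset.mul_sum,
      mul_comm, mul_left_comm]

section Shift

variable {N : ℕ}

def shift (a : Fin N) : Idx N → Idx N := Sum.map (· + a) (· + a)

def IsCyclicSymmetric (F : MvPolynomial (Idx N) ℝ) : Prop := ∀ a : Fin N, rename (shift a) F = F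

lemma shift_injective (a : Fin N) : Function.Injective (shift a) :=
  (add_left_injective a).sumMap (add_left_injective a)

lemma shift_apply_injective (i : Idx N) : Function.Injective fun a : Fin N => shift a i := by
  cases i <;> intro a b h <;> simpa [shift] using h

lemma rename_shift_rename_shift (a b : Fin N) (f : MvPolynomial (Idx N) ℝ) :
    rename (shift a) (rename (shift b) f) = rename (shift (b + a)) f := by
  rw [rename_rename]
  congr 2
  funext i
  cases i <;> simp [shift, add_assoc]

open scoped Fin.IntCast Fin.NatCast Fin.CommRing in
lemma oplus_eq_sum_rename_shift [NeZero N] (f : MvPolynomial (Idx N) ℝ) :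
    oplus N f = ∑ a : Fin N, rename (shift a) f := by
  rw [oplus, ← Fin.sum_univ_eq_sum_range (fun l => tauPow N ((l : ℤ) + 1) f) N]
  refine Fintype.sum_equiv (Equiv.addRight 1) _ _ fun a => ?_
  simp [tauPow, shift, Fin.cast_val_eq_self]

lemma isCyclicSymmetric_oplus [NeZero N] (f : MvPolynomial (Idx N) ℝ) :
    IsCyclicSymmetric (oplus N f) := by
  intro a
  simp_rw [oplus_eq_sum_rename_shift, map_sum, rename_shift_rename_shift]
  exact Fintype.sum_equiv (Equiv.addRight a) _ _ fun _ => rfl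

lemma MvPolynomial.IsHomogeneous.oplus [NeZero N] {f : MvPolynomial (Idx N) ℝ} {n : ℕ}
    (hf : f.IsHomogeneous n) : (oplus N f).IsHomogeneous n := by
  rw [oplus_eq_sum_rename_shift]
  exact IsHomogeneous.sum _ _ _ fun _ _ => hf.rename_isHomogeneous

lemma IsCyclicSymmetric.pderiv_shift {F : MvPolynomial (Idx N) ℝ} (hF : IsCyclicSymmetric F)
    (a : Fin N) (i : Idx N) : pderiv (shift a i) F = rename (shift a) (pderiv i F) := by
  conv_lhs => rw [← hF a]
  exact pderiv_rename (shift_injective a) i F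

end Shift

section VectorField

variable {N : ℕ}

noncomputable def polyField (P : Idx N → MvPolynomial (Idx N) ℝ) : (Idx N → ℝ) → Idx N → ℝ :=
  fun z i => eval z (P i)

noncomputable def cyclicField (g h : MvPolynomial (Idx N) ℝ) : Idx N → MvPolynomial (Idx N) ℝ :=
  Sum.elim (fun j => rename (shift j) g) (fun j => rename (shift j) h)

lemma IsCyclicSymmetric.Xvec_eq [NeZero N] {F : MvPolynomial (Idx N) ℝ}
    (hF : IsCyclicSymmetric F) :
    Xvec N F = polyField (cyclicField (pderiv (Sum.inr 0) F) (-pderiv (Sum.inl 0) F)) := by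
  funext z i
  cases i with
  | inl j => simpa [Xvec, polyField, cyclicField, shift] using
      congrArg (eval z) (hF.pderiv_shift j (Sum.inr 0))
  | inr j => simpa [Xvec, polyField, cyclicField, shift] using
      congrArg (fun q => -eval z q) (hF.pderiv_shift j (Sum.inl 0))

lemma lieD_Xvec_polyField (𝒳 : MvPolynomial (Idx N) ℝ) (P : Idx N → MvPolynomial (Idx N) ℝ) :
    lieD (Xvec N 𝒳) (polyField P) = polyField fun i => poisson N (P i) 𝒳 := by
  funext z i
  have hP : HasFDerivAt (polyField P) (ContinuousLinearMap.pi fun i =>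
      ∑ l, eval z (pderiv l (P i)) • (ContinuousLinearMap.proj l : (Idx N → ℝ) →L[ℝ] ℝ)) z :=
    hasFDerivAt_pi.2 fun i => hasFDerivAt_eval (P i) z
  rw [lieD, hP.fderiv]
  simp [polyField, poisson, Xvec, Fintype.sum_sum_type, Finset.sum_sub_distrib, mul_comm,
    ← sub_eq_add_neg]

lemma IsCyclicSymmetric.poisson_rename_shift [NeZero N] {𝒳 : MvPolynomial (Idx N) ℝ}
    (h𝒳 : IsCyclicSymmetric 𝒳) (a : Fin N) (g : MvPolynomial (Idx N) ℝ) :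
    poisson N (rename (shift a) g) 𝒳 = rename (shift a) (poisson N g 𝒳) := by
  rw [poisson, poisson, map_sum]
  refine (Fintype.sum_equiv (Equiv.addRight a) _ _ fun j => ?_).symm
  have hl : (Sum.inl (j + a) : Idx N) = shift a (Sum.inl j) := rfl
  have hr : (Sum.inr (j + a) : Idx N) = shift a (Sum.inr j) := rfl
  rw [Equiv.coe_addRight, hl, hr, h𝒳.pderiv_shift, h𝒳.pderiv_shift,
    pderiv_rename (shift_injective a), pderiv_rename (shift_injective a)]
  simp only [map_sub, map_mul]

lemma IsCyclicSymmetric.iterate_lieD_polyField_cyclicField [NeZero N] {𝒳 : MvPolynomial (Idx N) ℝ}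
    (h𝒳 : IsCyclicSymmetric 𝒳) (g h : MvPolynomial (Idx N) ℝ) (p : ℕ) :
    (lieD (Xvec N 𝒳))^[p] (polyField (cyclicField g h)) =
      polyField (cyclicField ((poisson N · 𝒳)^[p] g) ((poisson N · 𝒳)^[p] h)) := by
  induction p with
  | zero => rfl
  | succ p ih =>
    rw [Function.iterate_succ_apply', ih, lieD_Xvec_polyField, Function.iterate_succ_apply',
      Function.iterate_succ_apply']
    congr 1
    funext i
    cases i <;> simp [cyclicField, h𝒳.poisson_rename_shift]

end VectorField

section NormBounds

variable {N : ℕ}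

lemma norm_polyField_cyclicField_le {g h : MvPolynomial (Idx N) ℝ} {d : ℕ}
    (hg : g.IsHomogeneous d) (hh : h.IsHomogeneous d) (z : Idx N → ℝ) :
    ‖polyField (cyclicField g h) z‖ ≤ (coeffL1 g + coeffL1 h) * ‖z‖ ^ d := by
  have hz : ∀ (a : Fin N) i, |(z ∘ shift a) i| ≤ ‖z‖ := fun a i => norm_le_pi_norm z (shift a i)
  have hg' := coeffL1_nonneg g
  have hh' := coeffL1_nonneg h
  refine (pi_norm_le_iff_of_nonneg (by positivity)).mpr fun i => ?_
  rw [Real.norm_eq_abs, add_mul]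
  cases i with
  | inl a =>
    simpa only [polyField, cyclicField, Sum.elim_inl, eval_rename] using
      (abs_eval_le hg (hz a)).trans (le_add_of_nonneg_right (by positivity))
  | inr a =>
    simpa only [polyField, cyclicField, Sum.elim_inr, eval_rename] using
      (abs_eval_le hh (hz a)).trans (le_add_of_nonneg_left (by positivity))

lemma euclNorm_nonneg (z : Idx N → ℝ) : 0 ≤ euclNorm z := Real.sqrt_nonneg _

lemma abs_le_euclNorm (z : Idx N → ℝ) (i : Idx N) : |z i| ≤ euclNorm z :=
  Real.abs_le_sqrt (Finset.single_le_sum (fun l _ => sq_nonneg (z l)) (Finset.mem_univ i))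

lemma sum_sq_comp_shift_le (z : Idx N → ℝ) (i : Idx N) :
    ∑ a : Fin N, z (shift a i) ^ 2 ≤ euclNorm z ^ 2 := by
  rw [euclNorm, Real.sq_sqrt (by positivity)]
  exact (Finset.sum_map Finset.univ ⟨_, shift_apply_injective i⟩ fun l => z l ^ 2).symm.trans_le
    (Finset.sum_le_univ_sum_of_nonneg fun _ => sq_nonneg _)

lemma euclNorm_sumElim_le (a b : Fin N → ℝ) :
    euclNorm (Sum.elim a b) ≤
      ‖(WithLp.toLp 2 a : EuclideanSpace ℝ (Fin N))‖ +
        ‖(WithLp.toLp 2 b : EuclideanSpace ℝ (Fin N))‖ := by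
  have ha := EuclideanSpace.real_norm_sq_eq (WithLp.toLp 2 a)
  have hb := EuclideanSpace.real_norm_sq_eq (WithLp.toLp 2 b)
  rw [euclNorm, Fintype.sum_sum_type, Real.sqrt_le_left (by positivity)]
  simp only [Sum.elim_inl, Sum.elim_inr] at *
  nlinarith [norm_nonneg (WithLp.toLp 2 a : EuclideanSpace ℝ (Fin N)),
    norm_nonneg (WithLp.toLp 2 b : EuclideanSpace ℝ (Fin N))]

lemma norm_orbit_monomial_le (u : Idx N →₀ ℕ) (hu : u.degree ≠ 0) (z : Idx N → ℝ) :
    ‖(WithLp.toLp 2 fun a => u.prod fun i e => z (shift a i) ^ e : EuclideanSpace ℝ (Fin N))‖ ≤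
      euclNorm z ^ u.degree := by
  obtain ⟨i, hi⟩ : ∃ i, u i ≠ 0 := by
    by_contra! h
    exact hu ((Finsupp.degree_eq_zero_iff u).mpr (Finsupp.ext h))
  set M := euclNorm z
  have hM := euclNorm_nonneg z
  rw [EuclideanSpace.norm_eq, Real.sqrt_le_left (by positivity)]
  calc ∑ a, ‖u.prod fun i e => z (shift a i) ^ e‖ ^ 2
      ≤ ∑ a : Fin N, z (shift a i) ^ 2 * (M ^ (u.degree - 1)) ^ 2 := by
        refine Finset.sum_le_sum fun a _ => ?_
        rw [← sq_abs (z _), ← mul_pow, Real.norm_eq_abs]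
        exact pow_le_pow_left₀ (abs_nonneg _)
          (abs_prod_pow_le_mul u hi fun l => abs_le_euclNorm z (shift a l)) 2
    _ = (∑ a : Fin N, z (shift a i) ^ 2) * (M ^ (u.degree - 1)) ^ 2 := (Finset.sum_mul ..).symm
    _ ≤ M ^ 2 * (M ^ (u.degree - 1)) ^ 2 :=
        mul_le_mul_of_nonneg_right (sum_sq_comp_shift_le z i) (by positivity)
    _ = (M ^ u.degree) ^ 2 := by
        rw [← mul_pow, ← pow_succ', Nat.sub_add_cancel (Nat.one_le_iff_ne_zero.mpr hu)]

lemma norm_orbit_eval_le {q : MvPolynomial (Idx N) ℝ} {d : ℕ}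
    (hq : q.IsHomogeneous d) (hd : d ≠ 0) (z : Idx N → ℝ) :
    ‖(WithLp.toLp 2 fun a => eval z (rename (shift a) q) : EuclideanSpace ℝ (Fin N))‖ ≤
      coeffL1 q * euclNorm z ^ d := by
  have hsum : (WithLp.toLp 2 fun a => eval z (rename (shift a) q) : EuclideanSpace ℝ (Fin N)) =
      ∑ u ∈ q.support, q.coeff u • WithLp.toLp 2 fun a => u.prod fun i e => z (shift a i) ^ e := by
    ext a
    simp only [eval_rename]
    simp only [eval_eq, WithLp.ofLp_sum, WithLp.ofLp_smul, Finset.sum_apply, Pi.smul_apply,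
      smul_eq_mul, Function.comp_apply, Finsupp.prod]
  rw [hsum, coeffL1, Finset.sum_mul]
  refine (norm_sum_le _ _).trans (Finset.sum_le_sum fun u hu => ?_)
  have hdeg : u.degree = d := (hq.degree_eq_sum_deg_support hu).symm
  rw [norm_smul, Real.norm_eq_abs, ← hdeg]
  exact mul_le_mul_of_nonneg_left (norm_orbit_monomial_le u (hdeg ▸ hd) z) (abs_nonneg _)

lemma euclNorm_polyField_cyclicField_le {g h : MvPolynomial (Idx N) ℝ} {d : ℕ}
    (hg : g.IsHomogeneous d) (hh : h.IsHomogeneous d) (hd : d ≠ 0) (z : Idx N → ℝ) :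
    euclNorm (polyField (cyclicField g h) z) ≤ (coeffL1 g + coeffL1 h) * euclNorm z ^ d := by
  have hsplit : polyField (cyclicField g h) z =
      Sum.elim (fun a => eval z (rename (shift a) g)) fun a => eval z (rename (shift a) h) := by
    funext i
    cases i <;> rfl
  rw [hsplit, add_mul]
  exact (euclNorm_sumElim_le _ _).trans
    (add_le_add (norm_orbit_eval_le hg hd z) (norm_orbit_eval_le hh hd z))

end NormBounds

section PoissonEstimates

variable {N : ℕ}

lemma MvPolynomial.IsHomogeneous.poisson {g 𝒳 : MvPolynomial (Idx N) ℝ} {m n : ℕ}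
    (hg : g.IsHomogeneous m) (h𝒳 : 𝒳.IsHomogeneous n) :
    (poisson N g 𝒳).IsHomogeneous (m - 1 + (n - 1)) :=
  IsHomogeneous.sum _ _ _ fun _ _ => (hg.pderiv.mul h𝒳.pderiv).sub (hg.pderiv.mul h𝒳.pderiv)

lemma hamNorm_one [NeZero N] (F : MvPolynomial (Idx N) ℝ) :
    hamNorm N 1 F = coeffL1 (pderiv (Sum.inr 0) F) + coeffL1 (-pderiv (Sum.inl 0) F) := by
  simp [hamNorm, pnorm, coeffL1]

lemma hamNorm_one_nonneg [NeZero N] (F : MvPolynomial (Idx N) ℝ) : 0 ≤ hamNorm N 1 F := by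
  rw [hamNorm_one]
  exact add_nonneg (coeffL1_nonneg _) (coeffL1_nonneg _)

lemma IsCyclicSymmetric.coeffL1_pderiv_shift {F : MvPolynomial (Idx N) ℝ}
    (hF : IsCyclicSymmetric F) (a : Fin N) (i : Idx N) :
    coeffL1 (pderiv (shift a i) F) = coeffL1 (pderiv i F) := by
  rw [hF.pderiv_shift, coeffL1_rename_of_injective (shift_injective a)]

lemma IsCyclicSymmetric.coeffL1_poisson_le [NeZero N] {𝒳 : MvPolynomial (Idx N) ℝ}
    (h𝒳 : IsCyclicSymmetric 𝒳) {g : MvPolynomial (Idx N) ℝ} {n : ℕ} (hg : g.IsHomogeneous n) :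
    coeffL1 (poisson N g 𝒳) ≤ n * hamNorm N 1 𝒳 * coeffL1 g := by
  set A := coeffL1 (pderiv (Sum.inr 0) 𝒳)
  set B := coeffL1 (pderiv (Sum.inl 0) 𝒳)
  have hA : ∀ j, coeffL1 (pderiv (Sum.inr j) 𝒳) = A := fun j => by
    simpa [shift] using h𝒳.coeffL1_pderiv_shift j (Sum.inr 0)
  have hB : ∀ j, coeffL1 (pderiv (Sum.inl j) 𝒳) = B := fun j => by
    simpa [shift] using h𝒳.coeffL1_pderiv_shift j (Sum.inl 0)
  have hA0 : 0 ≤ A := coeffL1_nonneg _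
  have hB0 : 0 ≤ B := coeffL1_nonneg _
  calc coeffL1 (poisson N g 𝒳)
      ≤ ∑ j, (coeffL1 (pderiv (Sum.inl j) g) * A + coeffL1 (pderiv (Sum.inr j) g) * B) := by
        refine (coeffL1_sum_le _ _).trans (Finset.sum_le_sum fun j _ => ?_)
        refine (coeffL1_sub_le _ _).trans (add_le_add ?_ ?_)
        · exact (coeffL1_mul_le _ _).trans_eq (by rw [hA])
        · exact (coeffL1_mul_le _ _).trans_eq (by rw [hB])
    _ ≤ ∑ l, coeffL1 (pderiv l g) * (A + B) := by
        rw [Fintype.sum_sum_type, ← Finset.sum_add_distrib]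
        refine Finset.sum_le_sum fun j _ => ?_
        nlinarith [coeffL1_nonneg (pderiv (Sum.inl j) g), coeffL1_nonneg (pderiv (Sum.inr j) g)]
    _ = (∑ l, coeffL1 (pderiv l g)) * (A + B) := (Finset.sum_mul ..).symm
    _ ≤ n * coeffL1 g * (A + B) :=
        mul_le_mul_of_nonneg_right (sum_coeffL1_pderiv_le hg) (add_nonneg hA0 hB0)
    _ = n * hamNorm N 1 𝒳 * coeffL1 g := by rw [hamNorm_one, coeffL1_neg]; ring

lemma isHomogeneous_iterate_poisson {𝒳 g : MvPolynomial (Idx N) ℝ} {r s : ℕ} (hr : 1 ≤ r)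
    (hs : 1 ≤ s) (h𝒳 : 𝒳.IsHomogeneous (r + 1)) (hg : g.IsHomogeneous s) (p : ℕ) :
    ((poisson N · 𝒳)^[p] g).IsHomogeneous (s + p * (r - 1)) := by
  induction p with
  | zero => simpa using hg
  | succ p ih =>
    rw [Function.iterate_succ_apply']
    convert ih.poisson h𝒳 using 1
    rw [add_mul, one_mul]
    omega

lemma IsCyclicSymmetric.coeffL1_iterate_poisson_le [NeZero N] {𝒳 g : MvPolynomial (Idx N) ℝ}
    {r s : ℕ} (hr : 1 ≤ r) (hs : 1 ≤ s) (h𝒳c : IsCyclicSymmetric 𝒳)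
    (h𝒳 : 𝒳.IsHomogeneous (r + 1)) (hg : g.IsHomogeneous s) (p : ℕ) :
    coeffL1 ((poisson N · 𝒳)^[p] g) ≤
      (∏ j ∈ Finset.range p, ((s : ℝ) + j * ((r : ℝ) - 1))) * coeffL1 g * hamNorm N 1 𝒳 ^ p := by
  induction p with
  | zero => simp
  | succ p ih =>
    have hdeg : ((s + p * (r - 1) : ℕ) : ℝ) = s + p * ((r : ℝ) - 1) := by
      push_cast [Nat.cast_sub hr]
      ring
    have hfac : 0 ≤ (s : ℝ) + p * ((r : ℝ) - 1) := hdeg ▸ Nat.cast_nonneg _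
    have hH := hamNorm_one_nonneg 𝒳
    rw [Function.iterate_succ_apply']
    calc _ ≤ (s + p * ((r : ℝ) - 1)) * hamNorm N 1 𝒳 * coeffL1 ((poisson N · 𝒳)^[p] g) :=
          hdeg ▸ h𝒳c.coeffL1_poisson_le (isHomogeneous_iterate_poisson hr hs h𝒳 hg p)
      _ ≤ (s + p * ((r : ℝ) - 1)) * hamNorm N 1 𝒳 *
            ((∏ j ∈ Finset.range p, ((s : ℝ) + j * ((r : ℝ) - 1))) * coeffL1 g *
              hamNorm N 1 𝒳 ^ p) := by gcongr
      _ = _ := by rw [Finset.prod_range_succ, pow_succ]; ring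

end PoissonEstimates

/-- For `𝒳 = χ^⊕` (`χ` homogeneous of degree `r+1`, `r ≥ 1`) and
`F = f^⊕` (`f` homogeneous of degree `s+1`, `s ≥ 1`), the iterated Lie derivatives satisfy
`‖(L_𝒳^p X_F)(z)‖ ≤ (∏_{j=0}^{p−1} [s + j(r−1)]) |X_F|₁ (|X_𝒳|₁)^p ‖z‖^{s+p(r−1)}`
for every `p ≥ 1` and `z`, both for the supremum (`ℓ^∞`) and the euclidean (`ℓ²`) norm. -/
theorem iterated_lie_derivative_field_estimate (N : ℕ) [NeZero N]
    (r s : ℕ) (hr : 1 ≤ r) (hs : 1 ≤ s)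
    (χ f : MvPolynomial (Idx N) ℝ)
    (hχ : χ.IsHomogeneous (r + 1)) (hf : f.IsHomogeneous (s + 1)) :
    (∀ (p : ℕ), 1 ≤ p → ∀ z : Idx N → ℝ,
        ‖(lieD (Xvec N (oplus N χ)))^[p] (Xvec N (oplus N f)) z‖ ≤
          (∏ j ∈ Finset.range p, ((s : ℝ) + j * ((r : ℝ) - 1))) *
            hamNorm N 1 (oplus N f) * hamNorm N 1 (oplus N χ) ^ p *
            ‖z‖ ^ (s + p * (r - 1))) ∧
    (∀ (p : ℕ), 1 ≤ p → ∀ z : Idx N → ℝ,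
        euclNorm ((lieD (Xvec N (oplus N χ)))^[p] (Xvec N (oplus N f)) z) ≤
          (∏ j ∈ Finset.range p, ((s : ℝ) + j * ((r : ℝ) - 1))) *
            hamNorm N 1 (oplus N f) * hamNorm N 1 (oplus N χ) ^ p *
            euclNorm z ^ (s + p * (r - 1))) := by
  set 𝒳 := oplus N χ
  set g := pderiv (Sum.inr 0) (oplus N f)
  set h := -pderiv (Sum.inl 0) (oplus N f)
  have h𝒳c : IsCyclicSymmetric 𝒳 := isCyclicSymmetric_oplus χ
  have h𝒳 : 𝒳.IsHomogeneous (r + 1) := hχ.oplus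
  have hg : g.IsHomogeneous s := by simpa using hf.oplus.pderiv
  have hh : h.IsHomogeneous s := by simpa using hf.oplus.pderiv.neg
  have hgp := isHomogeneous_iterate_poisson hr hs h𝒳 hg
  have hhp := isHomogeneous_iterate_poisson hr hs h𝒳 hh
  have hfield : ∀ p, (lieD (Xvec N 𝒳))^[p] (Xvec N (oplus N f)) =
      polyField (cyclicField ((poisson N · 𝒳)^[p] g) ((poisson N · 𝒳)^[p] h)) := by
    rw [(isCyclicSymmetric_oplus f).Xvec_eq]
    exact h𝒳c.iterate_lieD_polyField_cyclicField g h
  have hcoeff : ∀ p, coeffL1 ((poisson N · 𝒳)^[p] g) +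
      coeffL1 ((poisson N · 𝒳)^[p] h) ≤
        (∏ j ∈ Finset.range p, ((s : ℝ) + j * ((r : ℝ) - 1))) *
          hamNorm N 1 (oplus N f) * hamNorm N 1 𝒳 ^ p := fun p => by
    rw [hamNorm_one]
    exact (add_le_add (h𝒳c.coeffL1_iterate_poisson_le hr hs h𝒳 hg p)
      (h𝒳c.coeffL1_iterate_poisson_le hr hs h𝒳 hh p)).trans_eq (by ring)
  refine ⟨fun p _ z => ?_, fun p _ z => ?_⟩
  · rw [hfield]
    exact (norm_polyField_cyclicField_le (hgp p) (hhp p) z).trans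
      (mul_le_mul_of_nonneg_right (hcoeff p) (by positivity))
  · rw [hfield]
    exact (euclNorm_polyField_cyclicField_le (hgp p) (hhp p) (by omega) z).trans
      (mul_le_mul_of_nonneg_right (hcoeff p) (pow_nonneg (euclNorm_nonneg z) _))
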